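/- arXiv:math/0504281 — 3 statements merged into one kernel-verified Lean document; each statement's English description precedes it below -/
import Mathlib

section
/- Let k be a field of characteristic p > 0, let P be a finite p-group, and let M be a finitely generated module over the group algebra kP. For elements z₁, …, z_r of M, the following are equivalent: (a) the kP-submodule generated by z₁, …, z_r is a free kP-module with basis z₁, …, z_r and is a direct summand of M; (b) the elements Tr_P(z₁), …, Tr_P(z_r) are linearly independent over k, where Tr_P(z) = Σ_{g ∈ P} g·z. -/
section Aux

variable {k : Type*} [Field k] {P : Type*} [Group P] [Fintype P]

noncomputable def Nel (k : Type*) [Field k] (P : Type*) [Group P] [Fintype P] :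
    MonoidAlgebra k P := ∑ g : P, MonoidAlgebra.of k P g

lemma Nel_apply (h : P) : (Nel k P).coeff h = 1 := by
  classical
  rw [Nel, MonoidAlgebra.coeff_sum, Finset.sum_apply']
  simp [MonoidAlgebra.of_apply, Finsupp.single_apply]

lemma Nel_ne_zero : (Nel k P) ≠ 0 := fun h => by
  have := Nel_apply (k := k) (1 : P)
  rw [h] at this
  simp at this

lemma of_mul_Nel (g : P) : MonoidAlgebra.of k P g * Nel k P = Nel k P := by
  classical
  ext h
  rw [MonoidAlgebra.of_apply, MonoidAlgebra.coeff_single_mul_apply, one_mul, Nel_apply, Nel_apply]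

lemma smul_Nel_coeff (c : k) (h : P) : (c • Nel k P).coeff h = c := by
  rw [MonoidAlgebra.coeff_smul_apply, Nel_apply, smul_eq_mul, mul_one]

lemma eq_smul_Nel {u : MonoidAlgebra k P} (hu : ∀ g : P, MonoidAlgebra.of k P g * u = u) :
    u = u.coeff 1 • Nel k P := by
  ext h
  have h1 := congrArg (fun w : MonoidAlgebra k P => w.coeff h) (hu h)
  simp only [MonoidAlgebra.of_apply, MonoidAlgebra.coeff_single_mul_apply, one_mul,
    inv_mul_cancel] at h1
  rw [smul_Nel_coeff, ← h1]

end Aux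

section Fix

variable {k : Type*} [Field k] {P : Type*} [Group P] [Fintype P]

lemma of_smul_ksmul {V : Type*} [AddCommGroup V] [Module k V]
    [Module (MonoidAlgebra k P) V] [IsScalarTower k (MonoidAlgebra k P) V]
    (a : k) (g : P) (x : V) :
    MonoidAlgebra.of k P g • (a • x) = a • (MonoidAlgebra.of k P g • x) := by
  rw [← algebraMap_smul (MonoidAlgebra k P) a x, ← mul_smul, ← Algebra.commutes, mul_smul,
    algebraMap_smul]

lemma exists_fixed {p : ℕ} [Fact p.Prime] [CharP k p] (hP : IsPGroup p P)
    {V : Type*} [AddCommGroup V] [Module k V] [Module (MonoidAlgebra k P) V]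
    [IsScalarTower k (MonoidAlgebra k P) V] {v : V} (hv : v ≠ 0) :
    ∃ w ∈ Submodule.span (MonoidAlgebra k P) {v}, w ≠ 0 ∧
      ∀ g : P, MonoidAlgebra.of k P g • w = w := by
  classical
  letI : Algebra (ZMod p) k := ZMod.algebra k p
  letI : Module (ZMod p) V := Module.compHom V (algebraMap (ZMod p) k)
  have hz : ∀ (c : ZMod p) (x : V), c • x = (algebraMap (ZMod p) k c) • x := fun _ _ => rfl
  set S : Set V := Set.range (fun g : P => MonoidAlgebra.of k P g • v) with hS
  set W : Submodule (ZMod p) V := Submodule.span (ZMod p) S with hW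
  have hWg : ∀ (g : P), ∀ x ∈ W, MonoidAlgebra.of k P g • x ∈ W := by
    intro g x hx
    induction hx using Submodule.span_induction with
    | mem x hx =>
        obtain ⟨h, rfl⟩ := hx
        rw [← mul_smul, ← map_mul]
        exact Submodule.subset_span ⟨g * h, rfl⟩
    | zero => rw [smul_zero]; exact W.zero_mem
    | add x y _ _ hx hy => rw [smul_add]; exact W.add_mem hx hy
    | smul c x _ hx => rw [hz, of_smul_ksmul, ← hz]; exact W.smul_mem c hx
  haveI : FiniteDimensional (ZMod p) W :=
    FiniteDimensional.span_of_finite _ (Set.finite_range _)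
  haveI : Finite W := Module.finite_of_finite (ZMod p)
  letI : MulAction P W :=
    { smul := fun g x => ⟨MonoidAlgebra.of k P g • (x : V), hWg g x x.2⟩
      one_smul := fun x => Subtype.ext
        (show MonoidAlgebra.of k P 1 • (x : V) = x by rw [map_one, one_smul])
      mul_smul := fun g h x => Subtype.ext
        (show MonoidAlgebra.of k P (g * h) • (x : V)
            = MonoidAlgebra.of k P g • (MonoidAlgebra.of k P h • (x : V)) by
          rw [map_mul, mul_smul]) }
  have hvW : v ∈ W := by
    have h1 : MonoidAlgebra.of k P 1 • v ∈ S := ⟨1, rfl⟩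
    rw [map_one, one_smul] at h1
    exact Submodule.subset_span h1
  have hps : ∀ x : W, p • x = 0 := by
    intro x
    apply Subtype.ext
    have : ((p • x : W) : V) = p • (x : V) := rfl
    rw [this, ← Nat.cast_smul_eq_nsmul k, CharP.cast_eq_zero, zero_smul]
    rfl
  have hcard : p ∣ Nat.card W := by
    have h1 : addOrderOf (⟨v, hvW⟩ : W) = p :=
      addOrderOf_eq_prime (hps _) (by simpa [Subtype.ext_iff] using hv)
    have h2 := addOrderOf_dvd_natCard (⟨v, hvW⟩ : W)
    rwa [h1] at h2
  have hfix := hP.card_modEq_card_fixedPoints W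
  have hdvd : p ∣ Nat.card (MulAction.fixedPoints P W) :=
    Nat.modEq_zero_iff_dvd.mp
      ((hfix.symm.trans (Nat.modEq_zero_iff_dvd.mpr hcard)).symm.symm)
  have h0 : (0 : W) ∈ MulAction.fixedPoints P W := by
    intro g
    refine Subtype.ext ?_
    show MonoidAlgebra.of k P g • ((0 : W) : V) = ((0 : W) : V)
    rw [ZeroMemClass.coe_zero, smul_zero]
  have hex : ∃ x : MulAction.fixedPoints P W, (x : W) ≠ 0 := by
    by_contra hcon
    push_neg at hcon
    have huniq : ∀ x : MulAction.fixedPoints P W, x = ⟨0, h0⟩ :=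
      fun x => Subtype.ext (hcon x)
    have hone : Nat.card (MulAction.fixedPoints P W) = 1 :=
      Nat.card_eq_one_iff_unique.mpr
        ⟨⟨fun a b => (huniq a).trans (huniq b).symm⟩, ⟨⟨0, h0⟩⟩⟩
    rw [hone] at hdvd
    exact Nat.Prime.one_lt (Fact.out (p := p.Prime)) |>.ne' (Nat.dvd_one.mp hdvd)
  obtain ⟨x, hx0⟩ := hex
  have hsub : ∀ y ∈ W, y ∈ Submodule.span (MonoidAlgebra k P) {v} := by
    intro y hy
    induction hy using Submodule.span_induction with
    | mem y hy =>
        obtain ⟨g, rfl⟩ := hy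
        exact Submodule.smul_mem _ _ (Submodule.mem_span_singleton_self v)
    | zero => exact Submodule.zero_mem _
    | add a b _ _ ha hb => exact Submodule.add_mem _ ha hb
    | smul c y _ hy =>
        rw [hz, ← algebraMap_smul (MonoidAlgebra k P) (algebraMap (ZMod p) k c) y]
        exact Submodule.smul_mem _ _ hy
  refine ⟨((x : W) : V), hsub _ (x : W).2, ?_, ?_⟩
  · intro h
    exact hx0 (Subtype.ext h)
  · intro g
    have := x.2 g
    exact congrArg Subtype.val this

end Fix

section Fh

variable {k : Type*} [Field k] {P : Type*} [Group P] [Fintype P]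
variable {M : Type*} [AddCommGroup M] [Module k M] [Module (MonoidAlgebra k P) M]
  [IsScalarTower k (MonoidAlgebra k P) M]

noncomputable def Fmap (f : M →ₗ[k] k) (m : M) : MonoidAlgebra k P :=
  ∑ g : P, MonoidAlgebra.single g⁻¹ (f (MonoidAlgebra.of k P g • m))

lemma Fmap_add (f : M →ₗ[k] k) (m m' : M) :
    Fmap (P := P) f (m + m') = Fmap f m + Fmap f m' := by
  unfold Fmap
  have h1 : ∀ g ∈ (Finset.univ : Finset P), MonoidAlgebra.single g⁻¹ (f (MonoidAlgebra.of k P g • (m + m')))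
      = MonoidAlgebra.single g⁻¹ (f (MonoidAlgebra.of k P g • m))
        + MonoidAlgebra.single g⁻¹ (f (MonoidAlgebra.of k P g • m')) := by
    intro g _
    rw [smul_add, map_add]
    exact MonoidAlgebra.single_add _ _ _
  rw [Finset.sum_congr rfl h1, Finset.sum_add_distrib]

lemma Fmap_ksmul (f : M →ₗ[k] k) (a : k) (m : M) :
    Fmap (P := P) f (a • m) = a • Fmap f m := by
  unfold Fmap
  rw [Finset.smul_sum]
  refine Finset.sum_congr rfl fun g _ => ?_
  rw [of_smul_ksmul, map_smul, MonoidAlgebra.smul_single]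

lemma Fmap_of_smul (f : M →ₗ[k] k) (h : P) (m : M) :
    Fmap (P := P) f (MonoidAlgebra.of k P h • m) = MonoidAlgebra.of k P h * Fmap f m := by
  unfold Fmap
  rw [Finset.mul_sum]
  refine Fintype.sum_equiv (Equiv.mulRight h) _ _ fun g => ?_
  rw [← mul_smul, ← map_mul]
  show MonoidAlgebra.single g⁻¹ (f (MonoidAlgebra.of k P (g * h) • m))
      = MonoidAlgebra.single h 1
        * MonoidAlgebra.single ((Equiv.mulRight h) g)⁻¹ (f (MonoidAlgebra.of k P (g * h) • m))
  rw [MonoidAlgebra.single_mul_single, one_mul]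
  congr 1
  show g⁻¹ = h * (g * h)⁻¹
  group

lemma Fmap_smul (f : M →ₗ[k] k) (c : MonoidAlgebra k P) (m : M) :
    Fmap (P := P) f (c • m) = c * Fmap f m := by
  induction c using MonoidAlgebra.induction_linear with
  | zero =>
      rw [zero_smul, zero_mul]
      simp [Fmap]
  | add a b ha hb => rw [add_smul, Fmap_add, ha, hb, add_mul]
  | single a b =>
      have h1 : (MonoidAlgebra.single a b : MonoidAlgebra k P) = b • MonoidAlgebra.of k P a := by
        rw [MonoidAlgebra.of_apply]
        rw [MonoidAlgebra.smul_single, smul_eq_mul, mul_one]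
      rw [h1, smul_assoc, Fmap_ksmul, Fmap_of_smul, smul_mul_assoc]

noncomputable def Fhom (f : M →ₗ[k] k) : M →ₗ[MonoidAlgebra k P] MonoidAlgebra k P where
  toFun := Fmap f
  map_add' := Fmap_add f
  map_smul' := fun c m => by
    show Fmap f (c • m) = c • Fmap f m
    rw [Fmap_smul, smul_eq_mul]

lemma Fmap_fixedpt (f : M →ₗ[k] k) (m : M)
    (hm : ∀ g : P, MonoidAlgebra.of k P g • m = m) :
    Fmap (P := P) f m = f m • Nel k P := by
  unfold Fmap
  rw [Nel, Finset.smul_sum]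
  refine Fintype.sum_equiv (Equiv.inv P) _ _ fun g => ?_
  rw [hm g]
  show MonoidAlgebra.single g⁻¹ (f m) = f m • MonoidAlgebra.of k P g⁻¹
  rw [MonoidAlgebra.of_apply, MonoidAlgebra.smul_single, smul_eq_mul, mul_one]

end Fh

/-- Over a field `k` of characteristic `p > 0` and a finite `p`-group `P`,
for a finitely generated `kP`-module `M` and elements `z₁,…,z_r` of `M`, the map
`(kP)^r → M` sending the `i`-th standard generator to `z_i` is injective with image
a direct summand of `M` if and only if the trace elements `Tr_P(z_i) = ∑_{g∈P} g•z_i`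
are linearly independent over `k`. -/
theorem stmt_3 (k : Type*) [Field k] (p : ℕ) [Fact p.Prime] [CharP k p]
    (P : Type*) [Group P] [Fintype P] (hP : IsPGroup p P)
    (M : Type*) [AddCommGroup M] [Module k M] [Module (MonoidAlgebra k P) M]
    [IsScalarTower k (MonoidAlgebra k P) M] [Module.Finite (MonoidAlgebra k P) M]
    (r : ℕ) (z : Fin r → M) :
    (Function.Injective (fun v : Fin r → MonoidAlgebra k P => ∑ i, v i • z i) ∧
      ∃ N : Submodule (MonoidAlgebra k P) M,
        IsCompl (Submodule.span (MonoidAlgebra k P) (Set.range z)) N) ↔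
    LinearIndependent k (fun i : Fin r => ∑ g : P, (MonoidAlgebra.of k P g) • z i) := by
  classical
  have hTN : ∀ i, (∑ g : P, (MonoidAlgebra.of k P g) • z i) = Nel k P • z i :=
    fun i => (Finset.sum_smul).symm
  constructor
  · rintro ⟨hinj, -⟩
    rw [Fintype.linearIndependent_iff]
    intro c hc
    have h0 : (fun i => c i • Nel k P) = (0 : Fin r → MonoidAlgebra k P) := by
      apply hinj
      show ∑ i, (c i • Nel k P) • z i = ∑ i, (0 : Fin r → MonoidAlgebra k P) i • z i
      simp only [Pi.zero_apply, zero_smul, Finset.sum_const_zero]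
      rw [← hc]
      refine Finset.sum_congr rfl fun i _ => ?_
      rw [smul_assoc, hTN i]
    intro i
    have h2 := congrArg (fun u : MonoidAlgebra k P => u.coeff 1) (congrFun h0 i)
    simpa [smul_Nel_coeff, Nel_apply] using h2
  · intro hT
    -- dual functionals
    have hf : ∀ j : Fin r, ∃ f : M →ₗ[k] k,
        ∀ i, f (∑ g : P, MonoidAlgebra.of k P g • z i) = if i = j then 1 else 0 := by
      intro j
      set T : Fin r → M := fun i => ∑ g : P, MonoidAlgebra.of k P g • z i with hTdef
      let b := Module.Basis.span hT
      obtain ⟨f, hfext⟩ := LinearMap.exists_extend (b.coord j)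
      refine ⟨f, fun i => ?_⟩
      have hmem : T i ∈ Submodule.span k (Set.range T) := Submodule.subset_span ⟨i, rfl⟩
      have h1 : f (T i) = b.coord j ⟨T i, hmem⟩ := by
        rw [← hfext]; rfl
      have hb : b i = ⟨T i, hmem⟩ := Module.Basis.span_apply hT i
      rw [h1, ← hb, Module.Basis.coord_apply, Module.Basis.repr_self, Finsupp.single_apply]
    choose f hf using hf
    -- the linear maps
    let φ : (Fin r → MonoidAlgebra k P) →ₗ[MonoidAlgebra k P] M :=
      { toFun := fun v => ∑ i, v i • z i
        map_add' := fun v w => by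
          simp only [Pi.add_apply, add_smul]
          exact Finset.sum_add_distrib
        map_smul' := fun c v => by
          simp only [Pi.smul_apply, smul_eq_mul, RingHom.id_apply, Finset.smul_sum, mul_smul] }
    let π' : M →ₗ[MonoidAlgebra k P] (Fin r → MonoidAlgebra k P) :=
      LinearMap.pi (fun j => Fhom (f j))
    let ψ := π'.comp φ
    -- key computation
    have hψN : ∀ c : Fin r → k,
        ψ (fun i => c i • Nel k P) = fun j => c j • Nel k P := by
      intro c
      funext j
      show Fmap (f j) (∑ i, (c i • Nel k P) • z i) = c j • Nel k P
      have h1 : ∀ i ∈ (Finset.univ : Finset (Fin r)),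
          (c i • Nel k P) • z i = c i • (Nel k P • z i) :=
        fun i _ => smul_assoc _ _ _
      rw [Finset.sum_congr rfl h1]
      have h2 : ∀ i ∈ (Finset.univ : Finset (Fin r)),
          (Fhom (f j)) (c i • (Nel k P • z i))
            = (if i = j then c i else 0) • Nel k P := by
        intro i _
        rw [LinearMap.map_smul_of_tower]
        have hfix : ∀ g : P, MonoidAlgebra.of k P g • (Nel k P • z i) = Nel k P • z i := by
          intro g; rw [← mul_smul, of_mul_Nel]
        have h3 : (Fhom (f j)) (Nel k P • z i) = Fmap (P := P) (f j) (Nel k P • z i) := rfl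
        rw [h3, Fmap_fixedpt _ _ hfix, ← hTN i, hf j i, smul_smul]
        rw [mul_ite, mul_one, mul_zero]
      have h4 : Fmap (P := P) (f j) (∑ i, c i • (Nel k P • z i))
          = ∑ i, (Fhom (f j)) (c i • (Nel k P • z i)) := by
        exact map_sum (Fhom (f j)) _ _
      rw [h4, Finset.sum_congr rfl h2]
      simp only [ite_smul, zero_smul]
      rw [Finset.sum_ite_eq' Finset.univ j (fun i => c i • Nel k P)]
      simp
    -- injectivity of ψ
    have hψinj : Function.Injective ψ := by
      rw [← LinearMap.ker_eq_bot (M := Fin r → MonoidAlgebra k P), eq_bot_iff]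
      intro v hv
      rw [Submodule.mem_bot]
      by_contra hv0
      obtain ⟨w, hwspan, hw0, hwfix⟩ := exists_fixed (k := k) hP hv0
      have hwker : ψ w = 0 := by
        have hle : Submodule.span (MonoidAlgebra k P) {v} ≤ LinearMap.ker ψ := by
          rw [Submodule.span_singleton_le_iff_mem]
          exact hv
        exact hle hwspan
      have hcomp : ∀ j, ∀ g : P, MonoidAlgebra.of k P g * w j = w j := by
        intro j g
        have := congrFun (hwfix g) j
        rwa [Pi.smul_apply, smul_eq_mul] at this
      have hwj : ∀ j, w j = (w j).coeff 1 • Nel k P := fun j => eq_smul_Nel (hcomp j)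
      have hw' : w = fun i => (w i).coeff 1 • Nel k P := funext hwj
      apply hw0
      rw [hw'] at hwker
      rw [hψN (fun i => (w i).coeff 1)] at hwker
      have hz : ∀ j, (w j).coeff 1 = 0 := by
        intro j
        have h5 := congrArg (fun u : MonoidAlgebra k P => u.coeff 1) (congrFun hwker j)
        simpa [smul_Nel_coeff, Nel_apply] using h5
      funext j
      rw [hwj j, hz j, zero_smul]
      rfl
    -- bijectivity of ψ
    haveI : Module.Finite k (MonoidAlgebra k P) :=
      Module.Finite.equiv (MonoidAlgebra.coeffLinearEquiv k).symm
    have hψsurj : Function.Surjective ψ := by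
      have := (LinearMap.injective_iff_surjective
        (f := ψ.restrictScalars k)).mp hψinj
      exact this
    let e := LinearEquiv.ofBijective ψ ⟨hψinj, hψsurj⟩
    let π : M →ₗ[MonoidAlgebra k P] (Fin r → MonoidAlgebra k P) :=
      (e.symm : (Fin r → MonoidAlgebra k P) →ₗ[MonoidAlgebra k P] _).comp π'
    have hret : ∀ v, π (φ v) = v := by
      intro v
      show e.symm (π' (φ v)) = v
      have : π' (φ v) = e v := rfl
      rw [this, e.symm_apply_apply]
    have hli : Function.LeftInverse π φ := hret
    constructor
    · exact hli.injective
    · have hrange : Submodule.span (MonoidAlgebra k P) (Set.range z) = LinearMap.range φ := by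
        apply le_antisymm
        · rw [Submodule.span_le]
          rintro _ ⟨i, rfl⟩
          have hsing : ∑ l, Pi.single (M := fun _ : Fin r => MonoidAlgebra k P) i 1 l • z l
              = z i := by
            rw [Finset.sum_eq_single i (fun l _ hl => by rw [Pi.single_eq_of_ne hl, zero_smul])
              (by simp)]
            rw [Pi.single_eq_same, one_smul]
          exact LinearMap.mem_range.mpr ⟨Pi.single i 1, hsing⟩
        · rintro x hx
          rw [LinearMap.mem_range] at hx
          obtain ⟨v, rfl⟩ := hx
          have hveq : φ v = ∑ i, v i • z i := rfl
          rw [hveq]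
          exact Submodule.sum_mem _ fun i _ =>
            Submodule.smul_mem _ _ (Submodule.subset_span (Set.mem_range_self i))
      let pr : M →ₗ[MonoidAlgebra k P] LinearMap.range φ :=
        LinearMap.codRestrict (LinearMap.range φ) (φ.comp π)
          (fun m => LinearMap.mem_range_self φ (π m))
      have hpr : ∀ x : LinearMap.range φ, pr x = x := by
        rintro ⟨x, hx⟩
        rw [LinearMap.mem_range] at hx
        obtain ⟨v, rfl⟩ := hx
        apply Subtype.ext
        rw [LinearMap.codRestrict_apply]
        show φ (π (φ v)) = φ v
        rw [hret]
      refine ⟨LinearMap.ker pr, ?_⟩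
      rw [hrange]
      exact LinearMap.isCompl_of_proj hpr
end

section
/- Let G be a finite group, let k ⊆ k' be an algebraic extension of fields, and let (M_n)_{n ≥ 0} be a sequence of finite-dimensional kG-modules. Suppose there is a finite set U' of finitely generated indecomposable k'G-modules such that for every n the base change k' ⊗_k M_n is isomorphic to a finite direct sum of elements of U'. Then there is a finite set U of finitely generated indecomposable kG-modules such that for every n the module M_n is isomorphic to a finite direct sum of elements of U. -/
open TensorProduct

/-- The base change of a representation `ρ : Representation k G V` to a field extension `k'`:
`G` acts on `k' ⊗[k] V` through the second tensor factor. -/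
noncomputable def repBaseChange {k G V : Type*} [CommRing k] (k' : Type*) [CommRing k']
    [Algebra k k'] [Monoid G] [AddCommGroup V] [Module k V]
    (ρ : Representation k G V) : Representation k' G (k' ⊗[k] V) where
  toFun g := (ρ g).baseChange k'
  map_one' := by
    simp only [map_one]
    exact LinearMap.baseChange_one k V
  map_mul' g h := by
    simp only [map_mul]
    exact LinearMap.baseChange_mul (ρ g) (ρ h)

/-- A module is indecomposable if it is nonzero and is not the direct sum of two
nonzero submodules. -/
def IsIndecomposableModule (R V : Type*) [Ring R] [AddCommMonoid V] [Module R V] : Prop :=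
  Nontrivial V ∧ ∀ (N N' : Submodule R V), IsCompl N N' → N = ⊥ ∨ N' = ⊥

universe u v

/-- A sequence of `R`-modules `M n` is indecomposably finite if there is a finite set
`T 0, …, T (s-1)` of finitely generated indecomposable `R`-modules such that every `M n`
is isomorphic to a finite direct sum of copies of the `T j`. -/
def IsIndecomposablyFinite (R : Type u) [Ring R] (M : ℕ → Type v)
    [∀ n, AddCommMonoid (M n)] [∀ n, Module R (M n)] : Prop :=
  ∃ (s : ℕ) (T : Fin s → ModuleCat.{v} R),
    (∀ j, IsIndecomposableModule R (T j)) ∧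
    (∀ j, Module.Finite R (T j)) ∧
    ∀ n, ∃ e : Fin s → ℕ, Nonempty (M n ≃ₗ[R] Π j : Fin s, (Fin (e j) → T j))



section Retract

variable (A : Type*) [Ring A]

/-- `N` is a retract (equivalently, a direct summand up to isomorphism) of `M`. -/
def IsRetract (N M : Type*) [AddCommGroup N] [Module A N] [AddCommGroup M] [Module A M] :
    Prop :=
  ∃ (f : N →ₗ[A] M) (g : M →ₗ[A] N), g ∘ₗ f = LinearMap.id

variable {A}

variable {N M P : Type*} [AddCommGroup N] [Module A N] [AddCommGroup M] [Module A M]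
  [AddCommGroup P] [Module A P]

theorem IsRetract.of_equiv (e : N ≃ₗ[A] M) : IsRetract A N M :=
  ⟨e.toLinearMap, e.symm.toLinearMap, by ext x; simp⟩

theorem IsRetract.trans (h1 : IsRetract A N M) (h2 : IsRetract A M P) : IsRetract A N P := by
  obtain ⟨f1, g1, h1⟩ := h1
  obtain ⟨f2, g2, h2⟩ := h2
  refine ⟨f2 ∘ₗ f1, g1 ∘ₗ g2, ?_⟩
  calc g1 ∘ₗ g2 ∘ₗ f2 ∘ₗ f1 = g1 ∘ₗ (g2 ∘ₗ f2) ∘ₗ f1 := by rw [LinearMap.comp_assoc]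
  _ = g1 ∘ₗ f1 := by rw [h2, LinearMap.id_comp]
  _ = LinearMap.id := h1

theorem isRetract_pi {ι : Type*} [Fintype ι] [DecidableEq ι] (X : ι → Type*)
    [∀ i, AddCommGroup (X i)] [∀ i, Module A (X i)] (i : ι) :
    IsRetract A (X i) (Π j, X j) :=
  ⟨LinearMap.single A X i, LinearMap.proj i, by ext x; simp⟩

variable (A N) in
/-- The endomorphism ring of `N` is local: whenever two endomorphisms sum to the identity,
one of them is invertible. -/
def HasLocalEnd : Prop :=
  Nontrivial N ∧ ∀ a b : Module.End A N, a + b = 1 → IsUnit a ∨ IsUnit b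

theorem one_ne_zero_end (hN : Nontrivial N) : (1 : Module.End A N) ≠ 0 := by
  obtain ⟨x, hx⟩ := exists_ne (0 : N)
  intro h
  apply hx
  have : (1 : Module.End A N) x = (0 : Module.End A N) x := by rw [h]
  simpa using this

end Retract
section Retract2

variable {A : Type*} [Ring A]
variable {N M : Type*} [AddCommGroup N] [Module A N] [AddCommGroup M] [Module A M]

theorem HasLocalEnd.exists_isUnit_of_sum {ι : Type*} (hN : HasLocalEnd A N) (s : Finset ι)
    (a : ι → Module.End A N) (hsum : ∑ i ∈ s, a i = 1) : ∃ i ∈ s, IsUnit (a i) := by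
  classical
  induction s using Finset.induction generalizing a with
  | empty =>
    rw [Finset.sum_empty] at hsum
    exact absurd hsum.symm (one_ne_zero_end hN.1)
  | @insert i s hi ih =>
    rw [Finset.sum_insert hi] at hsum
    rcases hN.2 _ _ hsum with h | h
    · exact ⟨i, Finset.mem_insert_self i s, h⟩
    · set u := h.unit with hu
      have hsum' : ∑ j ∈ s, ((↑u⁻¹ : Module.End A N) * a j) = 1 := by
        rw [← Finset.mul_sum]
        have : (∑ i ∈ s, a i) = (u : Module.End A N) := h.unit_spec
        rw [this, Units.inv_mul]
      obtain ⟨j, hj, hju⟩ := ih _ hsum'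
      refine ⟨j, Finset.mem_insert_of_mem hj, ?_⟩
      have : a j = (u : Module.End A N) * ((↑u⁻¹ : Module.End A N) * a j) := by
        rw [← mul_assoc, Units.mul_inv, one_mul]
      rw [this]
      exact (Units.isUnit u).mul hju

theorem HasLocalEnd.exists_retract_of_retract_pi {ι : Type*} [Fintype ι] [DecidableEq ι]
    (hN : HasLocalEnd A N) (X : ι → Type*) [∀ i, AddCommGroup (X i)] [∀ i, Module A (X i)]
    (h : IsRetract A N (Π i, X i)) : ∃ i, IsRetract A N (X i) := by
  obtain ⟨f, g, hgf⟩ := h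
  set a : ι → Module.End A N := fun i => g ∘ₗ (LinearMap.single A X i) ∘ₗ (LinearMap.proj i) ∘ₗ f
    with ha
  have hsum : ∑ i, a i = 1 := by
    ext x
    have : (∑ i, a i) x = ∑ i, a i x := by
      rw [LinearMap.sum_apply]
    rw [this]
    have : ∀ i, a i x = g (Pi.single i (f x i)) := fun i => rfl
    simp_rw [this]
    rw [← map_sum, Finset.univ_sum_single (f x)]
    have hx : g (f x) = x := congrFun (congrArg DFunLike.coe hgf) x
    simpa using hx
  obtain ⟨i, _, hiu⟩ := hN.exists_isUnit_of_sum Finset.univ a hsum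
  set u := hiu.unit
  refine ⟨i, (LinearMap.proj i) ∘ₗ f, (↑u⁻¹ : Module.End A N) ∘ₗ g ∘ₗ LinearMap.single A X i, ?_⟩
  have : (↑u⁻¹ : Module.End A N) ∘ₗ (g ∘ₗ LinearMap.single A X i) ∘ₗ ((LinearMap.proj i) ∘ₗ f)
      = (↑u⁻¹ : Module.End A N) * (a i) := by
    rw [ha]
    ext x
    rfl
  calc ((↑u⁻¹ : Module.End A N) ∘ₗ g ∘ₗ LinearMap.single A X i) ∘ₗ (LinearMap.proj i) ∘ₗ f
      = (↑u⁻¹ : Module.End A N) * (a i) := by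
        rw [← this]; ext x; rfl
    _ = (↑u⁻¹ : Module.End A N) * (u : Module.End A N) := by rw [hiu.unit_spec]
    _ = 1 := Units.inv_mul u

theorem IsRetract.linearEquiv_of_indecomposable (hN : Nontrivial N)
    (hM : IsIndecomposableModule A M) (h : IsRetract A N M) : Nonempty (N ≃ₗ[A] M) := by
  obtain ⟨f, g, hgf⟩ := h
  have hgf' : ∀ x, g (f x) = x := fun x => congrFun (congrArg DFunLike.coe hgf) x
  set e : M →ₗ[A] M := f ∘ₗ g with he
  have hee : ∀ y, e (e y) = e y := by intro y; simp [he, hgf']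
  have hcompl : IsCompl (LinearMap.range e) (LinearMap.ker e) := by
    constructor
    · rw [disjoint_iff_inf_le]
      rintro y ⟨⟨z, hz⟩, hy2⟩
      have : e y = 0 := hy2
      simp only [Submodule.mem_bot]
      rw [← hz] at this ⊢
      rw [hee] at this
      exact this
    · rw [codisjoint_iff_le_sup]
      intro y _
      have : y = e y + (y - e y) := by abel
      rw [this]
      refine Submodule.add_mem_sup (LinearMap.mem_range_self e y) ?_
      simp [LinearMap.mem_ker, map_sub, hee]
  rcases hM.2 _ _ hcompl with hr | hk
  · exfalso
    obtain ⟨x, hx⟩ := exists_ne (0 : N)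
    have h1 : e (f x) = f x := by simp [he, hgf']
    have h2 : f x ∈ LinearMap.range e := ⟨f x, h1⟩
    rw [hr, Submodule.mem_bot] at h2
    apply hx
    rw [← hgf' x, h2, map_zero]
  · have hinj : Function.Injective e := LinearMap.ker_eq_bot.mp hk
    have hfg : ∀ y, f (g y) = y := by
      intro y
      apply hinj
      show e (e y) = e y
      exact hee y
    exact ⟨LinearEquiv.ofLinear f g (by ext y; exact hfg y) (by ext x; exact hgf' x)⟩

theorem hasLocalEnd_of_indecomposable [IsNoetherian A N] [IsArtinian A N]
    (h : IsIndecomposableModule A N) : HasLocalEnd A N := by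
  refine ⟨h.1, fun a b hab => ?_⟩
  have key : ∀ f : Module.End A N, IsUnit f ∨ IsNilpotent f := by
    intro f
    obtain ⟨n, hn, hn1⟩ := ((f.eventually_isCompl_ker_pow_range_pow).and
      (Filter.eventually_ge_atTop 1)).exists
    rcases h.2 _ _ hn with hker | hrange
    · left
      have hinj : Function.Injective f := by
        have hi : Function.Injective (f ^ n) := LinearMap.ker_eq_bot.mp hker
        have hpow : f ^ n = f ^ (n - 1) * f := by
          rw [← pow_succ, Nat.sub_add_cancel hn1]
        intro x y hxy
        apply hi
        rw [hpow]
        simp only [Module.End.mul_apply, hxy]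
      have hsurj : Function.Surjective f := by
        have hr : LinearMap.range (f ^ n) = ⊤ := by
          have := hn.codisjoint
          rw [hker, codisjoint_iff, bot_sup_eq] at this
          exact this
        intro y
        have : y ∈ LinearMap.range (f ^ n) := by rw [hr]; trivial
        obtain ⟨x, hx⟩ := this
        have hpow : f ^ n = f * f ^ (n - 1) := by
          rw [← pow_succ', Nat.sub_add_cancel hn1]
        rw [hpow] at hx
        exact ⟨(f ^ (n - 1)) x, hx⟩
      exact (Module.End.isUnit_iff f).mpr ⟨hinj, hsurj⟩
    · right
      exact ⟨n, LinearMap.range_eq_bot.mp hrange⟩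
  rcases key a with ha | ha
  · exact Or.inl ha
  · right
    have : b = 1 - a := by rw [← hab]; abel
    rw [this]
    exact (IsNilpotent.isUnit_one_sub ha)

end Retract2
section Decomp

universe w

variable {A : Type*} [Ring A]

theorem IsIndecomposableModule.of_linearEquiv {N M : Type*} [AddCommGroup N] [Module A N]
    [AddCommGroup M] [Module A M] (e : N ≃ₗ[A] M) (h : IsIndecomposableModule A N) :
    IsIndecomposableModule A M := by
  obtain ⟨hnt, hsplit⟩ := h
  constructor
  · exact Equiv.nontrivial e.symm.toEquiv
  · intro P Q hPQ
    have oi : Submodule A M ≃o Submodule A N := Submodule.orderIsoMapComap e.symm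
    have := hsplit (oi P) (oi Q) (hPQ.map oi)
    rcases this with h1 | h1
    · left
      have := congrArg oi.symm h1
      rwa [OrderIso.symm_apply_apply, map_bot] at this
    · right
      have := congrArg oi.symm h1
      rwa [OrderIso.symm_apply_apply, map_bot] at this

/-- Linear equivalence between a Pi type over a sum and the product of Pi types. -/
def sumPiLinearEquiv {ι κ : Type*} (X : ι ⊕ κ → Type*) [∀ s, AddCommGroup (X s)]
    [∀ s, Module A (X s)] :
    (Π s, X s) ≃ₗ[A] (Π i, X (Sum.inl i)) × (Π j, X (Sum.inr j)) :=
  Equiv.toLinearEquiv (Equiv.sumPiEquivProdPi X)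
    { map_add := fun _ _ => rfl, map_smul := fun _ _ => rfl }

variable (k : Type*) [Field k] [Algebra k A]

theorem exists_indec_decomposition_aux (d : ℕ) :
    ∀ (N : Type w) [AddCommGroup N] [Module k N] [Module A N] [IsScalarTower k A N]
    [Module.Finite k N], Module.finrank k N ≤ d →
    ∃ (ι : Type) (_ : Fintype ι) (W : ι → Submodule A N),
      (∀ i, IsIndecomposableModule A ↥(W i)) ∧ Nonempty (N ≃ₗ[A] Π i, ↥(W i)) := by
  induction d with
  | zero =>
    intro N _ _ _ _ _ hd
    refine ⟨Empty, inferInstance, fun i => i.elim, fun i => i.elim, ?_⟩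
    have h0 : Module.finrank k N = 0 := Nat.le_zero.mp hd
    have : Subsingleton N := by
      have := Module.finrank_zero_iff (R := k) (M := N) |>.mp h0
      exact this
    exact ⟨LinearEquiv.ofSubsingleton _ _⟩
  | succ d ih =>
    intro N _ _ _ _ _ hd
    rcases subsingleton_or_nontrivial N with hs | hnt
    · refine ⟨Empty, inferInstance, fun i => i.elim, fun i => i.elim, ?_⟩
      exact ⟨LinearEquiv.ofSubsingleton _ _⟩
    by_cases hindec : IsIndecomposableModule A N
    · refine ⟨PUnit, inferInstance, fun _ => (⊤ : Submodule A N),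
        fun _ => hindec.of_linearEquiv Submodule.topEquiv.symm, ?_⟩
      exact ⟨Submodule.topEquiv.symm.trans (LinearEquiv.funUnique PUnit A
        ↥(⊤ : Submodule A N)).symm⟩
    · -- N is decomposable: find a nontrivial splitting
      have : ∃ (P Q : Submodule A N), IsCompl P Q ∧ P ≠ ⊥ ∧ Q ≠ ⊥ := by
        by_contra hcon
        push_neg at hcon
        exact hindec ⟨hnt, fun P Q hPQ => by
          by_cases hP : P = ⊥
          · exact Or.inl hP
          · exact Or.inr (by
              by_contra hQ
              exact hQ (hcon P Q hPQ hP))⟩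
      obtain ⟨P, Q, hPQ, hP, hQ⟩ := this
      -- finrank bounds
      have key : ∀ (R S : Submodule A N), IsCompl R S → S ≠ ⊥ →
          Module.finrank k ↥R < Module.finrank k N := by
        intro R S hRS hS
        have hRtop : R.restrictScalars k < ⊤ := by
          rcases lt_or_eq_of_le (le_top : R.restrictScalars k ≤ ⊤) with h | h
          · exact h
          · exfalso
            rw [Submodule.restrictScalars_eq_top_iff] at h
            rw [h] at hRS
            exact hS (by simpa using hRS.inf_eq_bot)
        exact Submodule.finrank_lt hRtop.ne
      have hPlt : Module.finrank k ↥P < Module.finrank k N := key P Q hPQ hQ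
      have hQlt : Module.finrank k ↥Q < Module.finrank k N := key Q P hPQ.symm hP
      haveI : Module.Finite k ↥P :=
        inferInstanceAs (Module.Finite k ↥(P.restrictScalars k))
      haveI : Module.Finite k ↥Q :=
        inferInstanceAs (Module.Finite k ↥(Q.restrictScalars k))
      obtain ⟨ιP, _, WP, hWPindec, ⟨eP⟩⟩ := ih ↥P (by omega)
      obtain ⟨ιQ, _, WQ, hWQindec, ⟨eQ⟩⟩ := ih ↥Q (by omega)
      set WmapP : ιP → Submodule A N := fun i => (WP i).map P.subtype with hWmapP
      set WmapQ : ιQ → Submodule A N := fun j => (WQ j).map Q.subtype with hWmapQ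
      have ePmap : ∀ i, ↥(WP i) ≃ₗ[A] ↥(WmapP i) := fun i =>
        Submodule.equivMapOfInjective P.subtype (Submodule.injective_subtype P) (WP i)
      have eQmap : ∀ j, ↥(WQ j) ≃ₗ[A] ↥(WmapQ j) := fun j =>
        Submodule.equivMapOfInjective Q.subtype (Submodule.injective_subtype Q) (WQ j)
      refine ⟨ιP ⊕ ιQ, inferInstance, Sum.elim WmapP WmapQ, ?_, ?_⟩
      · rintro (i | j)
        · exact (hWPindec i).of_linearEquiv (ePmap i)
        · exact (hWQindec j).of_linearEquiv (eQmap j)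
      · exact ⟨(Submodule.prodEquivOfIsCompl P Q hPQ).symm ≪≫ₗ
          LinearEquiv.prodCongr eP eQ ≪≫ₗ
          LinearEquiv.prodCongr (LinearEquiv.piCongrRight ePmap)
            (LinearEquiv.piCongrRight eQmap) ≪≫ₗ
          (sumPiLinearEquiv (fun s => ↥(Sum.elim WmapP WmapQ s))).symm⟩

theorem exists_indec_decomposition (N : Type w) [AddCommGroup N] [Module k N] [Module A N]
    [IsScalarTower k A N] [Module.Finite k N] :
    ∃ (ι : Type) (_ : Fintype ι) (W : ι → Submodule A N),
      (∀ i, IsIndecomposableModule A ↥(W i)) ∧ Nonempty (N ≃ₗ[A] Π i, ↥(W i)) :=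
  exists_indec_decomposition_aux k (Module.finrank k N) N le_rfl

end Decomp
section Count

variable {A : Type*} [Ring A]

/-- Cast along an equality of indices. -/
def LinearEquiv.castFam {β : Type*} (U : β → Type*) [∀ b, AddCommGroup (U b)]
    [∀ b, Module A (U b)] {x y : β} (h : x = y) : U x ≃ₗ[A] U y := by
  subst h; exact LinearEquiv.refl A (U x)

theorem exists_multiplicity_equiv {ι : Type*} [Fintype ι] {s : ℕ}
    (U : Fin s → Type*) [∀ j, AddCommGroup (U j)] [∀ j, Module A (U j)]
    (X : ι → Type*) [∀ i, AddCommGroup (X i)] [∀ i, Module A (X i)]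
    (c : ι → Fin s) (e : ∀ i, X i ≃ₗ[A] U (c i)) :
    ∃ e' : Fin s → ℕ, Nonempty ((Π i, X i) ≃ₗ[A] Π j : Fin s, (Fin (e' j) → U j)) := by
  classical
  refine ⟨fun j => Fintype.card {i // c i = j}, ⟨?_⟩⟩
  refine LinearEquiv.piCongrRight e ≪≫ₗ
    (LinearEquiv.piCongrLeft A (fun i => U (c i)) (Equiv.sigmaFiberEquiv c)).symm ≪≫ₗ
    LinearEquiv.piCurry A (fun (j : Fin s) (t : {i // c i = j}) => U (c t.val)) ≪≫ₗ
    LinearEquiv.piCongrRight (fun j => ?_)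
  refine LinearEquiv.piCongrRight (fun t => LinearEquiv.castFam U t.prop) ≪≫ₗ ?_
  exact LinearEquiv.funCongrLeft A (U j) (Fintype.equivFin {i // c i = j}).symm

end Count
section RepBridge

open MonoidAlgebra

variable {k G : Type*} [CommSemiring k] [Monoid G]
variable {V W : Type*} [AddCommMonoid V] [Module k V] [AddCommMonoid W] [Module k W]

theorem repHom_aux (ρ : Representation k G V) (τ : Representation k G W) (f : V →ₗ[k] W)
    (hf : ∀ g x, f (ρ g x) = τ g (f x)) (a : MonoidAlgebra k G) (x : V) :
    f (ρ.asAlgebraHom a x) = τ.asAlgebraHom a (f x) := by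
  induction a using MonoidAlgebra.induction_on with
  | of g => simp [Representation.asAlgebraHom_of, hf]
  | add a b ha hb => simp [map_add, ha, hb]
  | smul r a ha => simp [map_smul, ha]

/-- A `G`-equivariant `k`-linear map gives a `MonoidAlgebra k G`-linear map between the
associated modules. -/
noncomputable def repHom (ρ : Representation k G V) (τ : Representation k G W) (f : V →ₗ[k] W)
    (hf : ∀ g x, f (ρ g x) = τ g (f x)) :
    ρ.asModule →ₗ[MonoidAlgebra k G] τ.asModule where
  toFun := f
  map_add' := map_add f
  map_smul' a x := repHom_aux ρ τ f hf a x

@[simp] theorem repHom_apply (ρ : Representation k G V) (τ : Representation k G W)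
    (f : V →ₗ[k] W) (hf) (x : ρ.asModule) : repHom ρ τ f hf x = f x := rfl

/-- A `G`-equivariant `k`-linear equivalence gives a `MonoidAlgebra k G`-linear equivalence
between the associated modules. -/
noncomputable def repEquiv (ρ : Representation k G V) (τ : Representation k G W) (e : V ≃ₗ[k] W)
    (he : ∀ g x, e (ρ g x) = τ g (e x)) :
    ρ.asModule ≃ₗ[MonoidAlgebra k G] τ.asModule :=
  LinearEquiv.ofLinear (repHom ρ τ e.toLinearMap he)
    (repHom τ ρ e.symm.toLinearMap (fun g y => by
      apply e.injective
      rw [he]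
      simp))
    (by ext x; exact e.apply_symm_apply x) (by ext x; exact e.symm_apply_apply x)

/-- Transfer the module structure of `ρ.asModule` along an additive equivalence that matches
the action on `MonoidAlgebra.single`. -/
noncomputable def repModuleEquiv (ρ : Representation k G V) {X : Type*} [AddCommMonoid X]
    [Module (MonoidAlgebra k G) X] (e : V ≃+ X)
    (he : ∀ (g : G) (r : k) (x : V), e (r • ρ g x) = MonoidAlgebra.single g r • e x) :
    ρ.asModule ≃ₗ[MonoidAlgebra k G] X where
  __ := e
  map_add' := map_add e
  map_smul' a x := by
    show e (ρ.asAlgebraHom a x) = a • e x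
    induction a using MonoidAlgebra.induction_on with
    | of g =>
      have := he g 1 x
      rw [one_smul] at this
      simpa [Representation.asAlgebraHom_of, MonoidAlgebra.of_apply] using this
    | add a b ha hb =>
      rw [map_add]
      show e (ρ.asAlgebraHom a x + ρ.asAlgebraHom b x) = _
      rw [map_add, ha, hb, add_smul]
    | smul r a ha =>
      rw [map_smul]
      show e (r • ρ.asAlgebraHom a x) = _
      have h1 : e (r • ρ.asAlgebraHom a x)
          = MonoidAlgebra.single (1 : G) r • e (ρ.asAlgebraHom a x) := by
        have := he 1 r (ρ.asAlgebraHom a x)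
        rwa [map_one, Module.End.one_apply] at this
      have halg : (algebraMap k (MonoidAlgebra k G)) r = MonoidAlgebra.single (1 : G) r := by
        simp [MonoidAlgebra.coe_algebraMap]
      rw [h1, ha, smul_smul, Algebra.smul_def, halg]

instance repScalarTower (ρ : Representation k G V) :
    IsScalarTower k (MonoidAlgebra k G) ρ.asModule := by
  constructor
  intro r a x
  show ρ.asAlgebraHom (r • a) x = r • ρ.asAlgebraHom a x
  rw [map_smul]
  rfl

theorem finite_asModule (ρ : Representation k G V) [Module.Finite k V] :
    Module.Finite k ρ.asModule := ‹Module.Finite k V›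

end RepBridge
section Res

variable {A A' : Type*} [Ring A] [Ring A']

/-- Type synonym for restriction of scalars along a ring hom. -/
@[nolint unusedArguments]
def ResM (_ : A →+* A') (X : Type*) : Type _ := X

variable {φ : A →+* A'}

instance {X : Type*} [AddCommGroup X] : AddCommGroup (ResM φ X) :=
  inferInstanceAs (AddCommGroup X)

noncomputable instance {X : Type*} [AddCommGroup X] [Module A' X] : Module A (ResM φ X) :=
  Module.compHom X φ

variable {X Y : Type*} [AddCommGroup X] [Module A' X] [AddCommGroup Y] [Module A' Y]

/-- Restriction of scalars for linear maps. -/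
noncomputable def ResM.map (f : X →ₗ[A'] Y) : ResM φ X →ₗ[A] ResM φ Y where
  toFun x := (f (x : X) : Y)
  map_add' := map_add f
  map_smul' a x := f.map_smul (φ a) x

@[simp] theorem ResM.map_apply (f : X →ₗ[A'] Y) (x : ResM φ X) :
    (ResM.map (φ := φ) f) x = f (x : X) := rfl

theorem IsRetract.res {N M : Type*} [AddCommGroup N] [Module A' N] [AddCommGroup M]
    [Module A' M] (h : IsRetract A' N M) : IsRetract A (ResM φ N) (ResM φ M) := by
  obtain ⟨f, g, hgf⟩ := h
  refine ⟨ResM.map f, ResM.map g, ?_⟩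
  ext x
  exact congrFun (congrArg DFunLike.coe hgf) (x : N)

/-- Restriction of scalars for linear equivalences. -/
noncomputable def ResM.congr (e : X ≃ₗ[A'] Y) : ResM φ X ≃ₗ[A] ResM φ Y :=
  LinearEquiv.ofLinear (ResM.map e.toLinearMap) (ResM.map e.symm.toLinearMap)
    (by ext x; exact e.apply_symm_apply (x : Y)) (by ext x; exact e.symm_apply_apply (x : X))

/-- Restriction of scalars commutes with Pi types. -/
noncomputable def ResM.pi {ι : Type*} (Z : ι → Type*) [∀ i, AddCommGroup (Z i)]
    [∀ i, Module A' (Z i)] : ResM φ (Π i, Z i) ≃ₗ[A] Π i, ResM φ (Z i) where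
  toFun v i := ((v : Π i, Z i) i : ResM φ (Z i))
  invFun w := ((fun i => (w i : Z i)) : ResM φ (Π i, Z i))
  left_inv _ := rfl
  right_inv _ := rfl
  map_add' _ _ := rfl
  map_smul' _ _ := rfl

end Res
section Tensor

open MonoidAlgebra

variable {k k' G : Type*} [Field k] [Field k'] [Algebra k k'] [Monoid G]
variable {V : Type*} [AddCommGroup V] [Module k V]

/-- The base-changed representation, viewed as a representation over the small field. -/
noncomputable def resRep (k' : Type*) [Field k'] [Algebra k k'] (ρ : Representation k G V) :
    Representation k G (k' ⊗[k] V) where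
  toFun g := ((repBaseChange k' ρ) g).restrictScalars k
  map_one' := by ext x; simp [repBaseChange]
  map_mul' g h := by ext x; simp [repBaseChange]

@[simp] theorem resRep_apply (ρ : Representation k G V) (g : G) (z : k' ⊗[k] V) :
    (resRep k' ρ) g z = (ρ g).baseChange k' z := rfl

/-- The pointwise representation on `Fin d → V`. -/
noncomputable def piRep (ρ : Representation k G V) (d : ℕ) :
    Representation k G (Fin d → V) where
  toFun g := LinearMap.pi fun i => (ρ g) ∘ₗ LinearMap.proj i
  map_one' := by ext v i; simp
  map_mul' g h := by ext v i; simp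

@[simp] theorem piRep_apply (ρ : Representation k G V) (d : ℕ) (g : G) (v : Fin d → V)
    (i : Fin d) : (piRep ρ d) g v i = ρ g (v i) := rfl

/-- `(piRep ρ d).asModule` is the direct sum of `d` copies of `ρ.asModule`. -/
noncomputable def piRepEquiv (ρ : Representation k G V) (d : ℕ) :
    (piRep ρ d).asModule ≃ₗ[MonoidAlgebra k G] (Fin d → ρ.asModule) :=
  repModuleEquiv (piRep ρ d)
    (AddEquiv.refl (Fin d → V) : (Fin d → V) ≃+ (Fin d → ρ.asModule))
    (by
      intro g r v
      funext i
      show r • (ρ g) (v i) = ρ.asAlgebraHom (MonoidAlgebra.single g r) (v i)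
      rw [Representation.asAlgebraHom_single]
      rfl)

/-- The ring homomorphism `kG →+* k'G`. -/
noncomputable def algφ (k k' G : Type*) [Field k] [Field k'] [Algebra k k'] [Monoid G] :
    MonoidAlgebra k G →+* MonoidAlgebra k' G :=
  ((MonoidAlgebra.lift k (MonoidAlgebra k' G) G) (MonoidAlgebra.of k' G)).toRingHom

theorem algφ_single (g : G) (r : k) :
    algφ k k' G (MonoidAlgebra.single g r) = MonoidAlgebra.single g (algebraMap k k' r) := by
  show ((MonoidAlgebra.lift k (MonoidAlgebra k' G) G) (MonoidAlgebra.of k' G))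
      (MonoidAlgebra.single g r) = _
  rw [MonoidAlgebra.lift_single]
  show r • MonoidAlgebra.single g (1 : k') = _
  rw [MonoidAlgebra.smul_single, Algebra.algebraMap_eq_smul_one]

/-- `(resRep k' ρ).asModule` is the restriction of scalars of
`(repBaseChange k' ρ).asModule` along `algφ`. -/
noncomputable def resRepEquivRes (ρ : Representation k G V) :
    (resRep k' ρ).asModule ≃ₗ[MonoidAlgebra k G]
      ResM (algφ k k' G) ((repBaseChange k' ρ).asModule) :=
  repModuleEquiv (resRep k' ρ)
    (AddEquiv.refl (k' ⊗[k] V) :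
      (k' ⊗[k] V) ≃+ ResM (algφ k k' G) ((repBaseChange k' ρ).asModule))
    (by
      intro g r z
      show r • ((ρ g).baseChange k' z)
        = (repBaseChange k' ρ).asAlgebraHom (algφ k k' G (MonoidAlgebra.single g r)) z
      rw [algφ_single, Representation.asAlgebraHom_single]
      show r • ((ρ g).baseChange k' z) = algebraMap k k' r • ((repBaseChange k' ρ) g z)
      rw [algebraMap_smul]
      rfl)

/-- Contraction of the `k'` factor by a functional. -/
noncomputable def plin (lam : k' →ₗ[k] k) : (k' ⊗[k] V) →ₗ[k] V :=
  (TensorProduct.lid k V).toLinearMap ∘ₗ TensorProduct.map lam LinearMap.id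

@[simp] theorem plin_tmul (lam : k' →ₗ[k] k) (a : k') (x : V) :
    plin (V := V) lam (a ⊗ₜ x) = lam a • x := by
  simp [plin]

theorem plin_equivariant (ρ : Representation k G V) (lam : k' →ₗ[k] k) (g : G)
    (z : k' ⊗[k] V) : plin lam ((resRep k' ρ) g z) = ρ g (plin lam z) := by
  induction z using TensorProduct.induction_on with
  | zero => simp
  | tmul a x => simp [repBaseChange]
  | add y z hy hz =>
    rw [resRep_apply] at hy hz
    simp [map_add, hy, hz]

theorem exists_one_functional (k k' : Type*) [Field k] [Field k'] [Algebra k k'] :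
    ∃ lam : k' →ₗ[k] k, lam 1 = 1 := by
  have h1 : LinearIndepOn k id ({1} : Set k') :=
    (linearIndepOn_singleton_iff k).mpr one_ne_zero
  let B := Module.Basis.extend h1
  have hmem : (1 : k') ∈ h1.extend (Set.subset_univ _) :=
    h1.subset_extend _ rfl
  refine ⟨B.coord ⟨1, hmem⟩, ?_⟩
  have hB : B ⟨1, hmem⟩ = (1 : k') := Module.Basis.extend_apply_self h1 ⟨1, hmem⟩
  have hc : B.coord ⟨1, hmem⟩ (B ⟨1, hmem⟩) = 1 := by
    simp [Module.Basis.coord_apply, Module.Basis.repr_self]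
  rwa [hB] at hc

/-- `ρ.asModule` is a retract of the restricted base change. -/
theorem isRetract_into_resRep (ρ : Representation k G V) :
    IsRetract (MonoidAlgebra k G) ρ.asModule (resRep k' ρ).asModule := by
  obtain ⟨lam, hlam⟩ := exists_one_functional k k'
  refine ⟨repHom ρ (resRep k' ρ) ((TensorProduct.mk k k' V) 1)
      (by intro g x; simp [repBaseChange]),
    repHom (resRep k' ρ) ρ (plin lam) (plin_equivariant ρ lam), ?_⟩
  ext x
  show plin lam ((1 : k') ⊗ₜ x) = x
  rw [plin_tmul, hlam, one_smul]

end Tensor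
section Spread

open MonoidAlgebra

variable {k k' G : Type*} [Field k] [Field k'] [Algebra k k'] [Monoid G]
variable {V : Type*} [AddCommGroup V] [Module k V]

/-- A finitely generated retract of the (restricted) base change of `ρ` is a retract of
finitely many copies of `ρ.asModule`. -/
theorem exists_retract_fin (ρ : Representation k G V) (N : Type*) [AddCommGroup N]
    [Module (MonoidAlgebra k G) N] [Module.Finite (MonoidAlgebra k G) N]
    (h : IsRetract (MonoidAlgebra k G) N (resRep k' ρ).asModule) :
    ∃ d : ℕ, IsRetract (MonoidAlgebra k G) N (Fin d → ρ.asModule) := by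
  classical
  obtain ⟨f, g, hgf⟩ := h
  obtain ⟨S, hS⟩ := Module.Finite.fg_top (R := MonoidAlgebra k G) (M := N)
  -- decompose the images of the generators into finitely many pure tensors
  have hrep : ∀ y : N, ∃ T : Finset (k' × V),
      (f y : k' ⊗[k] V) = ∑ p ∈ T, p.1 ⊗ₜ p.2 :=
    fun y => TensorProduct.exists_finset (f y)
  choose T hT using hrep
  set Wset : Set k' := ⋃ y ∈ (S : Set N), (Prod.fst '' ((T y : Set (k' × V)))) with hWset
  have hWfin : Wset.Finite :=
    Set.Finite.biUnion S.finite_toSet (fun y _ => (T y).finite_toSet.image _)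
  set W₀ : Submodule k k' := Submodule.span k Wset with hW₀
  haveI : FiniteDimensional k ↥W₀ := FiniteDimensional.span_of_finite k hWfin
  set d := Module.finrank k ↥W₀ with hd
  set bW : Module.Basis (Fin d) k ↥W₀ := Module.finBasis k ↥W₀ with hbW
  obtain ⟨C, hC⟩ := Submodule.exists_isCompl W₀
  set pr : k' →ₗ[k] ↥W₀ := W₀.linearProjOfIsCompl C hC with hpr
  set lam : Fin d → (k' →ₗ[k] k) := fun i => (bW.coord i) ∘ₗ pr with hlam
  set w : Fin d → k' := fun i => (bW i : k') with hw
  -- the key reconstruction identity on W₀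
  have key : ∀ a ∈ W₀, ∑ i, lam i a • w i = a := by
    intro a ha
    have h1 : pr a = ⟨a, ha⟩ := Submodule.linearProjOfIsCompl_apply_left hC ⟨a, ha⟩
    have h2 : ∑ i, (bW.repr ⟨a, ha⟩) i • bW i = (⟨a, ha⟩ : ↥W₀) := bW.sum_repr ⟨a, ha⟩
    calc ∑ i, lam i a • w i = ∑ i, ((bW.repr ⟨a, ha⟩) i • (bW i) : ↥W₀) := by
          simp [hlam, hw, h1, Module.Basis.coord_apply]
          have h3 := congrArg Subtype.val h2
          rw [Submodule.coe_sum] at h3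
          exact h3
      _ = ((∑ i, (bW.repr ⟨a, ha⟩) i • bW i : ↥W₀) : k') := by
          rw [Submodule.coe_sum]
      _ = a := by rw [h2]
  -- the two transfer maps
  set Θ : (Fin d → V) →ₗ[k] (k' ⊗[k] V) :=
    ∑ i, (TensorProduct.mk k k' V (w i)) ∘ₗ LinearMap.proj i with hΘdef
  have hΘ : ∀ (gg : G) (v : Fin d → V), Θ ((piRep ρ d) gg v) = (resRep k' ρ) gg (Θ v) := by
    intro gg v
    simp [hΘdef, LinearMap.sum_apply, map_sum, repBaseChange]
  set Ψ : (k' ⊗[k] V) →ₗ[k] (Fin d → V) := LinearMap.pi (fun i => plin (lam i)) with hΨdef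
  have hΨ : ∀ (gg : G) (z : k' ⊗[k] V), Ψ ((resRep k' ρ) gg z) = (piRep ρ d) gg (Ψ z) := by
    intro gg z
    funext i
    show plin (lam i) ((resRep k' ρ) gg z) = ρ gg (plin (lam i) z)
    exact plin_equivariant ρ (lam i) gg z
  set ΘA := repHom (piRep ρ d) (resRep k' ρ) Θ hΘ with hΘA
  set ΨA := repHom (resRep k' ρ) (piRep ρ d) Ψ hΨ with hΨA
  set E : Submodule (MonoidAlgebra k G) (resRep k' ρ).asModule :=
    LinearMap.eqLocus (ΘA ∘ₗ ΨA) LinearMap.id with hE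
  -- pure tensors with left factor in `W₀` are fixed by `Θ ∘ Ψ`
  have hpure : ∀ a ∈ W₀, ∀ x : V, Θ (Ψ (a ⊗ₜ x)) = a ⊗ₜ x := by
    intro a ha x
    have h1 : Ψ (a ⊗ₜ x) = fun i => lam i a • x := by
      funext i
      show plin (lam i) (a ⊗ₜ x) = lam i a • x
      exact plin_tmul (lam i) a x
    rw [h1]
    have h2 : Θ (fun i => lam i a • x) = ∑ i, w i ⊗ₜ (lam i a • x) := by
      simp [hΘdef, LinearMap.sum_apply]
    rw [h2]
    have h3 : ∀ i : Fin d, (w i ⊗ₜ (lam i a • x) : k' ⊗[k] V) = (lam i a • w i) ⊗ₜ x := by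
      intro i
      rw [TensorProduct.tmul_smul, TensorProduct.smul_tmul']
    simp_rw [h3]
    rw [← TensorProduct.sum_tmul, key a ha]
  -- all images of `f` lie in the equalizer
  have hfE : ∀ x : N, f x ∈ E := by
    have hsub : ∀ y ∈ S, f y ∈ E := by
      intro y hy
      have : (f y : k' ⊗[k] V) = ∑ p ∈ T y, p.1 ⊗ₜ p.2 := hT y
      have hmem : ∀ p ∈ T y, (p.1 ⊗ₜ p.2 : k' ⊗[k] V) ∈ E := by
        intro p hp
        have hpW : p.1 ∈ W₀ := by
          apply Submodule.subset_span
          rw [hWset]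
          exact Set.mem_biUnion hy ⟨p, hp, rfl⟩
        show (ΘA ∘ₗ ΨA) (p.1 ⊗ₜ p.2) = LinearMap.id (R := MonoidAlgebra k G) (M := (resRep k' ρ).asModule) ((p.1 ⊗ₜ p.2 : k' ⊗[k] V) : (resRep k' ρ).asModule)
        exact hpure p.1 hpW p.2
      have : f y ∈ E := by
        rw [show (f y : (resRep k' ρ).asModule) = ∑ p ∈ T y, (p.1 ⊗ₜ p.2 : k' ⊗[k] V) from hT y]
        exact Submodule.sum_mem E hmem
      exact this
    intro x
    have htop : (⊤ : Submodule (MonoidAlgebra k G) N) ≤ E.comap f := by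
      rw [← hS]
      exact Submodule.span_le.mpr (fun y hy => hsub y hy)
    exact htop trivial
  -- assemble the retraction
  refine ⟨d, (piRepEquiv ρ d).toLinearMap ∘ₗ ΨA ∘ₗ f,
    g ∘ₗ ΘA ∘ₗ (piRepEquiv ρ d).symm.toLinearMap, ?_⟩
  ext x
  show g (ΘA ((piRepEquiv ρ d).symm ((piRepEquiv ρ d) (ΨA (f x))))) = x
  rw [LinearEquiv.symm_apply_apply]
  have h1 : ΘA (ΨA (f x)) = f x := hfE x
  rw [h1]
  exact congrFun (congrArg DFunLike.coe hgf) x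

end Spread

/-- Let `k ⊆ k'` be an algebraic field extension and `G` a finite group.
If there is a finite set `U'` of finitely generated indecomposable `k'G`-modules such
that every `k' ⊗_k M n` is isomorphic to a finite direct sum of elements of `U'`, then
there is a finite set `U` of finitely generated indecomposable `kG`-modules such that
every `M n` is isomorphic to a finite direct sum of elements of `U`. -/
theorem stmt_9 (k k' G : Type*) [Field k] [Field k'] [Algebra k k']
    [Algebra.IsAlgebraic k k'] [Group G] [Finite G]
    (M : ℕ → Type*) [∀ n, AddCommGroup (M n)] [∀ n, Module k (M n)]
    [∀ n, Module.Finite k (M n)]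
    (ρ : ∀ n, Representation k G (M n))
    (h : IsIndecomposablyFinite (MonoidAlgebra k' G)
      (fun n => (repBaseChange k' (ρ n)).asModule)) :
    IsIndecomposablyFinite (MonoidAlgebra k G) (fun n => (ρ n).asModule) := by
  classical
  obtain ⟨s', T', hT'indec, hT'fin, hdec⟩ := h
  choose e' En using hdec
  set A := MonoidAlgebra k G with hA
  set φ := algφ k k' G with hφ
  haveI : ∀ n, Module.Finite k ((ρ n).asModule) := fun n => finite_asModule (ρ n)
  have hdecomp := fun n =>
    exists_indec_decomposition (A := A) k ((ρ n).asModule)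
  choose ι ιinst W hind heq using hdecomp
  haveI : ∀ n, Fintype (ι n) := ιinst
  -- the chosen isomorphisms
  set eqn : ∀ n, (ρ n).asModule ≃ₗ[A] Π i : ι n, ↥(W n i) := fun n => (heq n).some with heqn
  set used : Fin s' → Prop := fun j => ∃ n, 0 < e' n j with hused
  set n₀ : Fin s' → ℕ := fun j => if hj : used j then hj.choose else 0 with hn₀def
  have hn₀spec : ∀ j, used j → 0 < e' (n₀ j) j := by
    intro j hj
    rw [hn₀def]
    simp only [dif_pos hj]
    exact hj.choose_spec
  -- the global finite family of indecomposables
  set Γ := (j : Fin s') × ι (n₀ j) with hΓ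
  set Uty : Γ → Type _ := fun γ => ↥(W (n₀ γ.1) γ.2) with hUty
  -- finite dimensionality of all pieces
  haveI hfinW : ∀ (m : ℕ) (i : ι m), Module.Finite k ↥(W m i) := fun m i =>
    inferInstanceAs (Module.Finite k ↥((W m i).restrictScalars k))
  -- the big restriction equivalence
  have bigEquiv : ∀ n, ((resRep k' (ρ n)).asModule ≃ₗ[A]
      Π j : Fin s', (Fin (e' n j) → ResM φ ↥(T' j))) := fun n =>
    resRepEquivRes (ρ n) ≪≫ₗ ResM.congr (En n).some ≪≫ₗ
      ResM.pi (fun j : Fin s' => (Fin (e' n j) → ↥(T' j))) ≪≫ₗ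
      LinearEquiv.piCongrRight (fun j => ResM.pi (fun _ : Fin (e' n j) => ↥(T' j)))
  -- matching each piece with a member of the global family
  have hmatch : ∀ (n : ℕ) (i : ι n), ∃ γ : Γ, Nonempty (↥(W n i) ≃ₗ[A] Uty γ) := by
    intro n i
    set N := ↥(W n i) with hN
    haveI : IsNoetherian A N := isNoetherian_of_tower k inferInstance
    haveI : IsArtinian A N := isArtinian_of_tower k inferInstance
    have hloc : HasLocalEnd A N := hasLocalEnd_of_indecomposable (hind n i)
    have rN : IsRetract A N ((ρ n).asModule) :=
      (isRetract_pi (fun i' : ι n => ↥(W n i')) i).trans (IsRetract.of_equiv (eqn n).symm)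
    have rN3 : IsRetract A N (Π j : Fin s', (Fin (e' n j) → ResM φ ↥(T' j))) :=
      (rN.trans (isRetract_into_resRep (k' := k') (ρ n))).trans (IsRetract.of_equiv (bigEquiv n))
    obtain ⟨j, rj⟩ := hloc.exists_retract_of_retract_pi _ rN3
    obtain ⟨t, rt⟩ := hloc.exists_retract_of_retract_pi _ rj
    have huj : used j := ⟨n, t.pos⟩
    have hn0 : 0 < e' (n₀ j) j := hn₀spec j huj
    have rT'3 : IsRetract (MonoidAlgebra k' G) ↥(T' j)
        ((repBaseChange k' (ρ (n₀ j))).asModule) :=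
      ((isRetract_pi (fun _ : Fin (e' (n₀ j) j) => ↥(T' j)) ⟨0, hn0⟩).trans
        (isRetract_pi (fun j' : Fin s' => (Fin (e' (n₀ j) j') → ↥(T' j'))) j)).trans
        (IsRetract.of_equiv (En (n₀ j)).some.symm)
    have rT'5 : IsRetract A (ResM φ ↥(T' j)) ((resRep k' (ρ (n₀ j))).asModule) :=
      (rT'3.res (φ := φ)).trans (IsRetract.of_equiv (resRepEquivRes (ρ (n₀ j))).symm)
    have rNfinal : IsRetract A N ((resRep k' (ρ (n₀ j))).asModule) := rt.trans rT'5
    haveI : Module.Finite A N := Module.Finite.of_restrictScalars_finite k A N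
    obtain ⟨d, rd⟩ := exists_retract_fin (ρ (n₀ j)) N rNfinal
    obtain ⟨_, r1⟩ := hloc.exists_retract_of_retract_pi
      (fun _ : Fin d => (ρ (n₀ j)).asModule) rd
    have r2 : IsRetract A N (Π i' : ι (n₀ j), ↥(W (n₀ j) i')) :=
      r1.trans (IsRetract.of_equiv (eqn (n₀ j)))
    obtain ⟨i', r3⟩ := hloc.exists_retract_of_retract_pi _ r2
    exact ⟨⟨j, i'⟩, r3.linearEquiv_of_indecomposable (hind n i).1 (hind (n₀ j) i')⟩
  -- assemble the global family as a `Fin`-indexed family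
  set sΓ := Fintype.card Γ with hsΓ
  set eΓ : Γ ≃ Fin sΓ := Fintype.equivFin Γ with heΓ
  refine ⟨sΓ, fun q => ModuleCat.of A (Uty (eΓ.symm q)), ?_, ?_, ?_⟩
  · intro q
    exact hind _ _
  · intro q
    show Module.Finite A (Uty (eΓ.symm q))
    exact Module.Finite.of_restrictScalars_finite k A _
  · intro n
    choose c hc using hmatch n
    have ecast : ∀ i : ι n, (↥(W n i) ≃ₗ[A] Uty (eΓ.symm (eΓ (c i)))) := fun i =>
      (hc i).some ≪≫ₗ LinearEquiv.castFam Uty (by simp)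
    obtain ⟨e, ⟨eqv⟩⟩ := exists_multiplicity_equiv
      (U := fun q : Fin sΓ => Uty (eΓ.symm q)) (X := fun i : ι n => ↥(W n i))
      (c := fun i => eΓ (c i)) ecast
    exact ⟨e, ⟨(eqn n) ≪≫ₗ eqv⟩⟩
end

section
/- Let k be a field, G a finite group, and V a kG-module. Suppose f ∈ V is a nonzero G-invariant element, e ∈ V is a G-invariant element, and U is a kG-submodule of V such that V = U ⊕ k·f as an internal direct sum of kG-modules. Fix an integer t ≥ 1, and in V^{t+1} let K_t be the k-span of the t vectors v_1 = (f, −e, 0, …, 0), v_2 = (0, f, −e, 0, …, 0), …, v_t = (0, …, 0, f, −e) (where v_i has f in coordinate i and −e in coordinate i+1), and let U_t = U^t ⊕ V denote the submodule of tuples whose first t coordinates lie in U. Then K_t is a kG-submodule of V^{t+1}, one has the internal direct sum V^{t+1} = K_t ⊕ U_t, and consequently V^{t+1}/K_t ≅ U^t ⊕ V as kG-modules. -/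
set_option maxHeartbeats 1000000

section aux
variable {k G : Type*} [Field k] [Group G]
variable {M : Type*} [AddCommGroup M] [Module k M] [Module (MonoidAlgebra k G) M]
  [IsScalarTower k (MonoidAlgebra k G) M]

lemma invariant_span_smul_mem (S : Set M)
    (hS : ∀ g : G, ∀ x ∈ S, (MonoidAlgebra.of k G g) • x = x)
    (a : MonoidAlgebra k G) {x : M} (hx : x ∈ Submodule.span k S) :
    a • x ∈ Submodule.span k S := by
  have hg : ∀ g : G, ∀ y ∈ Submodule.span k S,
      (MonoidAlgebra.of k G g) • y ∈ Submodule.span k S := by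
    intro g
    let L : M →ₗ[k] M :=
      { toFun := fun y => (MonoidAlgebra.of k G g) • y
        map_add' := fun y z => smul_add _ _ _
        map_smul' := fun c y => smul_comm _ _ _ }
    have : Submodule.span k S ≤ (Submodule.span k S).comap L := by
      rw [Submodule.span_le]
      intro s hs
      have : L s = s := hS g s hs
      simpa [Submodule.mem_comap, this] using Submodule.subset_span hs
    exact fun y hy => this hy
  have ha : a • x = (Finsupp.sum a.coeff fun g c => MonoidAlgebra.single g c) • x := by
    rw [MonoidAlgebra.sum_coeff_single]
  rw [ha, Finsupp.sum, Finset.sum_smul]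
  refine Submodule.sum_mem _ fun g _ => ?_
  rw [← MonoidAlgebra.smul_of, smul_assoc]
  exact Submodule.smul_mem _ _ (hg g x hx)

lemma invariant_span_coe (S : Set M)
    (hS : ∀ g : G, ∀ x ∈ S, (MonoidAlgebra.of k G g) • x = x) :
    ((Submodule.span (MonoidAlgebra k G) S : Set M)) = (Submodule.span k S : Set M) := by
  apply Set.Subset.antisymm
  · let p : Submodule (MonoidAlgebra k G) M :=
      { carrier := Submodule.span k S
        add_mem' := fun h1 h2 => Submodule.add_mem _ h1 h2
        zero_mem' := Submodule.zero_mem _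
        smul_mem' := fun a x hx => invariant_span_smul_mem S hS a hx }
    have : Submodule.span (MonoidAlgebra k G) S ≤ p :=
      Submodule.span_le.2 Submodule.subset_span
    exact fun x hx => this hx
  · intro x hx
    refine Submodule.span_induction ?_ ?_ ?_ ?_ hx
    · exact fun s hs => Submodule.subset_span hs
    · exact Submodule.zero_mem _
    · exact fun a b _ _ ha hb => Submodule.add_mem _ ha hb
    · intro c y _ hy
      have : c • y = (algebraMap k (MonoidAlgebra k G) c) • y := by
        rw [algebraMap_smul]
      rw [this]
      exact Submodule.smul_mem _ _ hy

end aux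

lemma sum_smul_v_coord {k V : Type*} [Field k] [AddCommGroup V] [Module k V]
    (f e : V) (t : ℕ) (v : Fin t → (Fin (t + 1) → V))
    (hv : ∀ (i : Fin t) (j : Fin (t + 1)),
      v i j = if (j : ℕ) = (i : ℕ) then f
        else if (j : ℕ) = (i : ℕ) + 1 then -e else 0)
    (a : Fin t → k) (j : Fin (t + 1)) :
    (∑ i, a i • v i) j =
      (if h : (j : ℕ) < t then a ⟨j, h⟩ • f else 0)
        + (if h : 0 < (j : ℕ) then
            a ⟨(j : ℕ) - 1, by have := j.isLt; omega⟩ • (-e) else 0) := by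
  rw [Finset.sum_apply]
  have hterm : ∀ i : Fin t, (a i • v i) j =
      (if (j : ℕ) = (i : ℕ) then a i • f else 0)
        + (if (j : ℕ) = (i : ℕ) + 1 then a i • (-e) else 0) := by
    intro i
    rw [Pi.smul_apply, hv]
    by_cases h1 : (j : ℕ) = (i : ℕ) <;> by_cases h2 : (j : ℕ) = (i : ℕ) + 1 <;>
      simp [h1, h2] <;> omega
  rw [Finset.sum_congr rfl (fun i _ => hterm i), Finset.sum_add_distrib]
  congr 1
  · by_cases hj : (j : ℕ) < t
    · rw [dif_pos hj]
      have : ∀ i : Fin t, (if (j : ℕ) = (i : ℕ) then a i • f else 0)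
          = (if i = ⟨j, hj⟩ then a i • f else 0) := by
        intro i
        congr 1
        simp [Fin.ext_iff, eq_comm]
      rw [Finset.sum_congr rfl (fun i _ => this i), Finset.sum_ite_eq' Finset.univ]
      simp
    · rw [dif_neg hj]
      refine Finset.sum_eq_zero fun i _ => ?_
      rw [if_neg]
      have := i.isLt; omega
  · by_cases hj : 0 < (j : ℕ)
    · rw [dif_pos hj]
      have hjt : (j : ℕ) - 1 < t := by have := j.isLt; omega
      have : ∀ i : Fin t, (if (j : ℕ) = (i : ℕ) + 1 then a i • (-e) else 0)
          = (if i = ⟨(j : ℕ) - 1, hjt⟩ then a i • (-e) else 0) := by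
        intro i
        congr 1
        simp [Fin.ext_iff]
        omega
      rw [Finset.sum_congr rfl (fun i _ => this i), Finset.sum_ite_eq' Finset.univ]
      simp
    · rw [dif_neg hj]
      refine Finset.sum_eq_zero fun i _ => ?_
      rw [if_neg]
      omega

/-- Let `V` be a `kG`-module, `f ∈ V` a nonzero `G`-invariant element,
`e ∈ V` a `G`-invariant element, and `U` a `kG`-submodule with `V = U ⊕ k·f`.
For `t ≥ 1` let `v_1, …, v_t ∈ V^{t+1}` be the vectors `v_i = (0,…,0,f,-e,0,…,0)`
(`f` in coordinate `i`, `-e` in coordinate `i+1`), let `K_t` be their span, and let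
`U_t = U^t ⊕ V` be the submodule of tuples whose first `t` coordinates lie in `U`.
Then `K_t` is a `kG`-submodule (its `k`-span is already `kG`-stable),
`V^{t+1} = K_t ⊕ U_t`, and consequently `V^{t+1}/K_t ≅ U^t ⊕ V` as `kG`-modules. -/
theorem stmt_13 (k G : Type*) [Field k] [Group G] [Finite G]
    (V : Type*) [AddCommGroup V] [Module k V] [Module (MonoidAlgebra k G) V]
    [IsScalarTower k (MonoidAlgebra k G) V]
    (f e : V) (hf0 : f ≠ 0)
    (hf : ∀ g : G, (MonoidAlgebra.of k G g) • f = f)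
    (he : ∀ g : G, (MonoidAlgebra.of k G g) • e = e)
    (U : Submodule (MonoidAlgebra k G) V)
    (hU : IsCompl U (Submodule.span (MonoidAlgebra k G) ({f} : Set V)))
    (t : ℕ) (ht : 1 ≤ t)
    (v : Fin t → (Fin (t + 1) → V))
    (hv : ∀ (i : Fin t) (j : Fin (t + 1)),
      v i j = if (j : ℕ) = (i : ℕ) then f
        else if (j : ℕ) = (i : ℕ) + 1 then -e else 0) :
    ((Submodule.span (MonoidAlgebra k G) (Set.range v) : Set (Fin (t + 1) → V)) =
        (Submodule.span k (Set.range v) : Set (Fin (t + 1) → V))) ∧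
    IsCompl (Submodule.span (MonoidAlgebra k G) (Set.range v))
      (⨅ (j : Fin (t + 1)) (_ : (j : ℕ) < t),
        Submodule.comap (LinearMap.proj (R := MonoidAlgebra k G) j) U) ∧
    Nonempty (((Fin (t + 1) → V) ⧸ Submodule.span (MonoidAlgebra k G) (Set.range v))
      ≃ₗ[MonoidAlgebra k G] ((Fin t → U) × V)) := by
  set K := Submodule.span (MonoidAlgebra k G) (Set.range v) with hK
  set W := (⨅ (j : Fin (t + 1)) (_ : (j : ℕ) < t),
        Submodule.comap (LinearMap.proj (R := MonoidAlgebra k G) j) U) with hW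
  -- each v i is G-invariant
  have hinv : ∀ g : G, ∀ x ∈ Set.range v, (MonoidAlgebra.of k G g) • x = x := by
    rintro g x ⟨i, rfl⟩
    funext j
    rw [Pi.smul_apply, hv]
    split_ifs
    · exact hf g
    · rw [smul_neg, he g]
    · exact smul_zero _
  have part1 : ((K : Set (Fin (t + 1) → V)) = Submodule.span k (Set.range v)) :=
    invariant_span_coe _ hinv
  -- span of f over kG equals span over k
  have hfspan : ((Submodule.span (MonoidAlgebra k G) ({f} : Set V) : Set V)
      = Submodule.span k ({f} : Set V)) := by
    refine invariant_span_coe _ ?_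
    intro g x hx
    rw [Set.mem_singleton_iff] at hx
    rw [hx]; exact hf g
  -- membership in W
  have hmemW : ∀ y : Fin (t + 1) → V, y ∈ W ↔ ∀ j : Fin (t + 1), (j : ℕ) < t → y j ∈ U := by
    intro y
    simp [hW, Submodule.mem_iInf]
  -- decomposition of V
  have hdecomp : ∀ y : V, ∃ c : k, y - c • f ∈ U := by
    intro y
    have hy : y ∈ U ⊔ Submodule.span (MonoidAlgebra k G) ({f} : Set V) := by
      rw [hU.sup_eq_top]; trivial
    obtain ⟨u, hu, s, hs, hsum⟩ := Submodule.mem_sup.1 hy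
    have hs' : s ∈ (Submodule.span k ({f} : Set V)) := by
      have : s ∈ (Submodule.span (MonoidAlgebra k G) ({f} : Set V) : Set V) := hs
      rwa [hfspan] at this
    obtain ⟨c, hc⟩ := Submodule.mem_span_singleton.1 hs'
    exact ⟨c, by rw [hc, ← hsum]; simpa using hu⟩
  choose c hc using hdecomp
  -- disjointness
  have hdis : Disjoint K W := by
    rw [Submodule.disjoint_def]
    intro x hxK hxW
    have hxk : x ∈ Submodule.span k (Set.range v) := by
      have : x ∈ (K : Set (Fin (t + 1) → V)) := hxK
      rwa [part1] at this
    obtain ⟨a, ha⟩ := (Submodule.mem_span_range_iff_exists_fun k).1 hxk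
    have hxW' := (hmemW x).1 hxW
    have hzero : ∀ n, ∀ h : n < t, a ⟨n, h⟩ = 0 := by
      intro n
      induction n with
      | zero =>
        intro h
        have hj : ((⟨0, by omega⟩ : Fin (t + 1)) : ℕ) < t := h
        have hxj := hxW' ⟨0, by omega⟩ hj
        rw [← ha, sum_smul_v_coord f e t v hv a, dif_pos hj, dif_neg (by simp)] at hxj
        rw [add_zero] at hxj
        have hmem : a ⟨0, h⟩ • f ∈ Submodule.span (MonoidAlgebra k G) ({f} : Set V) :=
          Submodule.smul_of_tower_mem _ _ (Submodule.subset_span rfl)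
        have h0 := Submodule.disjoint_def.1 hU.disjoint _ hxj hmem
        rcases smul_eq_zero.1 h0 with h' | h'
        · exact h'
        · exact absurd h' hf0
      | succ m ih =>
        intro h
        have hj : ((⟨m + 1, by omega⟩ : Fin (t + 1)) : ℕ) < t := h
        have hxj := hxW' ⟨m + 1, by omega⟩ hj
        rw [← ha, sum_smul_v_coord f e t v hv a, dif_pos hj,
          dif_pos (by simp : 0 < ((⟨m + 1, by omega⟩ : Fin (t + 1)) : ℕ))] at hxj
        have hm : a ⟨m, by omega⟩ = 0 := ih (by omega)
        have hidx : a ⟨((⟨m + 1, by omega⟩ : Fin (t + 1)) : ℕ) - 1, by omega⟩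
            = a ⟨m, by omega⟩ := by congr 1
        rw [hidx, hm, zero_smul, add_zero] at hxj
        have hmem : a ⟨m + 1, h⟩ • f ∈ Submodule.span (MonoidAlgebra k G) ({f} : Set V) :=
          Submodule.smul_of_tower_mem _ _ (Submodule.subset_span rfl)
        have h0 := Submodule.disjoint_def.1 hU.disjoint _ hxj hmem
        rcases smul_eq_zero.1 h0 with h' | h'
        · exact h'
        · exact absurd h' hf0
    rw [← ha]
    refine Finset.sum_eq_zero fun i _ => ?_
    have : a i = 0 := by
      have := hzero i.1 i.2
      simpa [Fin.eta] using this
    rw [this, zero_smul]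
  -- codisjointness
  have hcodis : Codisjoint K W := by
    rw [codisjoint_iff_le_sup]
    intro x _
    let xn : ℕ → V := fun n => if h : n < t + 1 then x ⟨n, h⟩ else 0
    let b : ℕ → k := fun n => Nat.rec (c (xn 0)) (fun m ih => c (xn (m + 1) + ih • e)) n
    have hb0 : b 0 = c (xn 0) := rfl
    have hbs : ∀ m, b (m + 1) = c (xn (m + 1) + b m • e) := fun m => rfl
    let a : Fin t → k := fun i => b i
    have hxn : ∀ j : Fin (t + 1), xn (j : ℕ) = x j := by
      intro j
      simp only [xn]
      rw [dif_pos j.isLt]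
    have key : ∀ j : Fin (t + 1), (j : ℕ) < t → x j - (∑ i, a i • v i) j ∈ U := by
      intro j hj
      rw [sum_smul_v_coord f e t v hv a j, dif_pos hj]
      rcases Nat.eq_zero_or_pos (j : ℕ) with h0 | hpos
      · rw [dif_neg (by omega)]
        have : a ⟨(j : ℕ), hj⟩ = c (x j) := by
          show b (j : ℕ) = c (x j)
          rw [h0, hb0, ← hxn j, h0]
        rw [this, add_zero]
        exact hc (x j)
      · obtain ⟨m, hm⟩ : ∃ m, (j : ℕ) = m + 1 := ⟨(j : ℕ) - 1, by omega⟩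
        rw [dif_pos hpos]
        have h1 : a ⟨(j : ℕ), hj⟩ = c (x j + b m • e) := by
          show b (j : ℕ) = c (x j + b m • e)
          rw [hm, hbs m, ← hxn j, hm]
        have h2 : a ⟨(j : ℕ) - 1, by have := j.isLt; omega⟩ = b m := by
          show b ((j : ℕ) - 1) = b m
          rw [hm]
          congr 1
        rw [h1, h2, smul_neg]
        have h3 : x j - (c (x j + b m • e) • f + -(b m • e))
            = (x j + b m • e) - c (x j + b m • e) • f := by abel
        rw [h3]
        exact hc (x j + b m • e)
    have hKmem : (∑ i, a i • v i) ∈ K := by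
      refine Submodule.sum_mem _ fun i _ => ?_
      exact Submodule.smul_of_tower_mem _ _ (Submodule.subset_span ⟨i, rfl⟩)
    have hWmem : (x - ∑ i, a i • v i) ∈ W := by
      rw [hmemW]
      intro j hj
      rw [Pi.sub_apply]
      exact key j hj
    exact Submodule.mem_sup.2 ⟨_, hKmem, _, hWmem, by abel⟩
  have hcompl : IsCompl K W := ⟨hdis, hcodis⟩
  refine ⟨part1, hcompl, ?_⟩
  let E2 : W ≃ₗ[MonoidAlgebra k G] (Fin t → U) × V :=
    { toFun := fun x =>
        (fun i => ⟨x.1 i.castSucc,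
          (hmemW x.1).1 x.2 i.castSucc (by simpa using i.isLt)⟩, x.1 (Fin.last t))
      map_add' := fun x y => rfl
      map_smul' := fun r x => rfl
      invFun := fun p =>
        ⟨fun j => if h : (j : ℕ) < t then (p.1 ⟨j, h⟩ : V) else p.2, by
          rw [hmemW]
          intro j hj
          rw [dif_pos hj]
          exact (p.1 ⟨j, hj⟩).2⟩
      left_inv := by
        intro x
        refine Subtype.ext (funext fun j => ?_)
        dsimp only
        by_cases h : (j : ℕ) < t
        · rw [dif_pos h]
          congr 1
        · have hj : j = Fin.last t := Fin.ext (by simp only [Fin.val_last]; have := j.isLt; omega)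
          rw [dif_neg h, hj]
      right_inv := by
        intro p
        refine Prod.ext (funext fun i => ?_) ?_
        · refine Subtype.ext ?_
          dsimp only
          rw [dif_pos (by simpa using i.isLt)]
          congr 1
        · dsimp only
          rw [dif_neg (by simp)] }
  exact ⟨(Submodule.quotientEquivOfIsCompl K W hcompl).trans E2⟩
end
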